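/- arXiv:2507.14616 — 6 statements merged into one kernel-verified Lean document; each statement's English description precedes it below -/
import Mathlib

section
/- Let p be an odd prime, let u ∈ F_p, let α ∈ F_p^× be a nonsquare, let E be a field of characteristic p, and let β ∈ E be an element with β² equal to the image of α in E. Then for every integer r with 0 ≤ r ≤ p-1 one has s_r(u,α) · t_r(u,α) = (P̄_r(u·β^{-1}))² in E, where s_r(u,α) and t_r(u,α) are viewed in E via the embedding of F_p. -/
open Polynomial

/-- The mod-`p` reduction of the `r`-th Legendre polynomial
`P_r(X) = 2^{-r} · Σ_{k=0}^{⌊r/2⌋} (-1)^k · C(r,k) · C(2r-2k, r) · X^{r-2k}`,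
defined directly over any field `E` (intended: of odd characteristic). -/
noncomputable def legendreMod (E : Type*) [Field E] (r : ℕ) : E[X] :=
  C (((2 : E) ^ r)⁻¹) * ∑ k ∈ Finset.range (r / 2 + 1),
    C ((-1 : E) ^ k * (r.choose k : E) * (((2 * r - 2 * k).choose r : ℕ) : E)) * X ^ (r - 2 * k)

/-- `s_r(u,α) = (-1)^r · Σ_{i ∈ S_r} (-1)^{(r-i)/2} · C(r,i) · C(r-i,(r-i)/2)
· (α-u²)^{(r-i)/2} · (2u)^i` where `S_r` is the set of `0 ≤ i ≤ r` of the same parity as `r`. -/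
def sCoef (p r : ℕ) (u α : ZMod p) : ZMod p :=
  (-1) ^ r * ∑ i ∈ (Finset.range (r + 1)).filter (fun i => i % 2 = r % 2),
    (-1) ^ ((r - i) / 2) * (r.choose i : ZMod p) * ((r - i).choose ((r - i) / 2) : ZMod p) *
      (α - u ^ 2) ^ ((r - i) / 2) * (2 * u) ^ i

/-- `t_r(u,α) = - Σ_{j ∈ S_{p-1-r}} (-1)^{(p-1-r-j)/2} · C(p-1-r,(p-1-r-j)/2) · C(r,j)
· α^{(p-1-r-j)/2} · u^j` where `S_{p-1-r}` is the set of `0 ≤ j ≤ p-1-r` of the same parity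
as `p-1-r`. -/
def tCoef (p r : ℕ) (u α : ZMod p) : ZMod p :=
  - ∑ j ∈ (Finset.range (p - 1 - r + 1)).filter (fun j => j % 2 = (p - 1 - r) % 2),
    (-1) ^ ((p - 1 - r - j) / 2) * ((p - 1 - r).choose ((p - 1 - r - j) / 2) : ZMod p) *
      (r.choose j : ZMod p) * α ^ ((p - 1 - r - j) / 2) * u ^ j

namespace StAux

variable {p : ℕ} [hp : Fact p.Prime]

lemma fact_ne {n : ℕ} (hn : n < p) : (n.factorial : ZMod p) ≠ 0 := by
  rw [Ne, ZMod.natCast_eq_zero_iff]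
  intro h
  exact absurd ((Nat.Prime.dvd_factorial hp.out).mp h) (Nat.not_le.mpr hn)

lemma cast_choose_mul {a b d : ℕ} (hd : b + d = a) :
    ((a.choose b : ℕ) : ZMod p) * ((b).factorial : ZMod p) * ((d).factorial : ZMod p)
      = ((a).factorial : ZMod p) := by
  have h1 : b ≤ a := by omega
  have h2 : a - b = d := by omega
  have := Nat.choose_mul_factorial_mul_factorial h1
  rw [h2] at this
  exact_mod_cast congrArg (fun n : ℕ => (n : ZMod p)) this

lemma fact_flip : ∀ (b a : ℕ), a + b = p - 1 →
    ((a).factorial : ZMod p) * ((b).factorial : ZMod p) = (-1 : ZMod p) ^ (b + 1)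
  | 0, a, h => by
    have : a = p - 1 := by omega
    subst this
    simp only [Nat.factorial_zero, Nat.cast_one, mul_one, pow_one, zero_add]
    exact ZMod.wilsons_lemma p
  | (b+1), a, h => by
    have h' : (a + 1) + b = p - 1 := by omega
    have ih := fact_flip b (a+1) h'
    have hq : (a + 1) + (b + 1) = p := by
      have := hp.out.two_le; omega
    have hcast : ((a : ZMod p) + 1) + ((b : ZMod p) + 1) = 0 := by
      have : (((a+1) + (b+1) : ℕ) : ZMod p) = 0 := by rw [hq]; exact ZMod.natCast_self p
      push_cast at this
      linear_combination this
    have ha1 : ((a+1 : ℕ).factorial : ZMod p) = ((a:ZMod p) + 1) * ((a).factorial : ZMod p) := by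
      rw [Nat.factorial_succ]; push_cast; ring
    have hb1 : ((b+1 : ℕ).factorial : ZMod p) = ((b:ZMod p) + 1) * ((b).factorial : ZMod p) := by
      rw [Nat.factorial_succ]; push_cast; ring
    rw [ha1] at ih
    rw [hb1, pow_succ]
    have hab : ((a : ZMod p) + 1) = -((b : ZMod p) + 1) := by linear_combination hcast
    rw [hab] at ih
    linear_combination -ih

lemma fact_dup (h : ℕ) (hph : p = 2 * h + 1) : ∀ j : ℕ,
    ((2 * j : ℕ).factorial : ZMod p) * ((h).factorial : ZMod p)
      = 4 ^ j * ((j).factorial : ZMod p) * ((h + j : ℕ).factorial : ZMod p)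
  | 0 => by simp
  | (j+1) => by
    have ih := fact_dup h hph j
    have e1 : 2 * (j + 1) = (2 * j + 1) + 1 := by ring
    have e2 : ((2*(j+1) : ℕ).factorial : ZMod p)
        = (2*(j:ZMod p) + 1 + 1) * (2*(j:ZMod p) + 1) * ((2 * j : ℕ).factorial : ZMod p) := by
      rw [e1, Nat.factorial_succ, Nat.factorial_succ]; push_cast; ring
    have e3 : ((h + (j+1) : ℕ).factorial : ZMod p)
        = ((h:ZMod p) + (j:ZMod p) + 1) * ((h + j : ℕ).factorial : ZMod p) := by
      have e : h + (j + 1) = (h + j) + 1 := by ring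
      rw [e, Nat.factorial_succ]; push_cast; ring
    have e4 : ((j+1 : ℕ).factorial : ZMod p) = ((j:ZMod p) + 1) * ((j : ℕ).factorial : ZMod p) := by
      rw [Nat.factorial_succ]; push_cast; ring
    have key : 2*(j:ZMod p) + 1 = 2 * ((h:ZMod p) + (j:ZMod p) + 1) := by
      have hnat : 2*(h+j+1) = 2*j+1+p := by omega
      have hc : ((2*(h+j+1) : ℕ) : ZMod p) = ((2*j+1+p : ℕ) : ZMod p) := by rw [hnat]
      push_cast [ZMod.natCast_self] at hc
      linear_combination -hc
    rw [e2, e3, e4, pow_succ]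
    linear_combination ((2*(j:ZMod p)+2)*(2*(j:ZMod p)+1)) * ih
      + (4^j * ((j:ℕ).factorial : ZMod p) * ((h+j:ℕ).factorial : ZMod p) * (2*(j:ZMod p)+2)) * key

lemma neg_one_pow_congr {R : Type*} [Monoid R] [HasDistribNeg R] {a b : ℕ} (h : a % 2 = b % 2) :
    (-1 : R) ^ a = (-1 : R) ^ b := by
  rcases Nat.even_or_odd a with ha | ha
  · have hb : Even b := by rw [Nat.even_iff] at *; omega
    rw [ha.neg_one_pow, hb.neg_one_pow]
  · have hb : Odd b := by rw [Nat.odd_iff] at *; omega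
    rw [ha.neg_one_pow, hb.neg_one_pow]

lemma euler_ns (hodd : Odd p) {α : ZMod p} (hα : α ≠ 0) (hns : ¬ IsSquare α) :
    α ^ (p / 2) = -1 := by
  have h1 : α ^ (p / 2) ≠ 1 := fun h => hns ((ZMod.euler_criterion p hα).mpr h)
  have h2 : α ^ (p / 2) * α ^ (p / 2) = 1 := by
    rw [← pow_add]
    have : p / 2 + p / 2 = p - 1 := by
      obtain ⟨m, hm⟩ := hodd; omega
    rw [this]
    exact ZMod.pow_card_sub_one_eq_one hα
  rcases mul_self_eq_one_iff.mp h2 with h | h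
  · exact absurd h h1
  · exact h

lemma TL (j k c : ℕ) (hph : p = 2 * (j + k + c) + 1) :
    (-1 : ZMod p) ^ c * 4 ^ (j + 2*k) * (((j + 2*c).choose c : ℕ) : ZMod p)
        * (((j + 2*k).choose j : ℕ) : ZMod p)
      = (-1 : ZMod p) ^ (j + k) * (((j + 2*k).choose k : ℕ) : ZMod p)
        * (((2*j + 2*k).choose (j + 2*k) : ℕ) : ZMod p) := by
  set A : ZMod p := ((c : ℕ).factorial : ZMod p) with hA
  set B : ZMod p := ((j + c : ℕ).factorial : ZMod p) with hB
  set C2 : ZMod p := ((j : ℕ).factorial : ZMod p) with hC2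
  set D : ZMod p := ((2*k : ℕ).factorial : ZMod p) with hD
  set E : ZMod p := ((k : ℕ).factorial : ZMod p) with hE
  set F : ZMod p := ((j + k : ℕ).factorial : ZMod p) with hF
  set L : ZMod p := ((j + k + c : ℕ).factorial : ZMod p) with hL
  set G1 : ZMod p := ((j + 2*c : ℕ).factorial : ZMod p) with hG1
  set H : ZMod p := ((j + 2*k : ℕ).factorial : ZMod p) with hH
  set I : ZMod p := ((2*j + 2*k : ℕ).factorial : ZMod p) with hI
  set J : ZMod p := ((j + 2*k + c : ℕ).factorial : ZMod p) with hJ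
  set K : ZMod p := ((2*j + 2*k + c : ℕ).factorial : ZMod p) with hK
  have R1 := cast_choose_mul (p:=p) (a := j+2*c) (b := c) (d := j+c) (by omega)
  have R2 := cast_choose_mul (p:=p) (a := j+2*k) (b := j) (d := 2*k) (by omega)
  have R3 := cast_choose_mul (p:=p) (a := j+2*k) (b := k) (d := j+k) (by omega)
  have R4 := cast_choose_mul (p:=p) (a := 2*j+2*k) (b := j+2*k) (d := j) (by omega)
  have R5 := fact_dup (j+k+c) hph k
  rw [show j+k+c+k = j+2*k+c by omega] at R5
  have R6 := fact_dup (j+k+c) hph (j+k)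
  rw [show 2*(j+k) = 2*j+2*k by omega, show j+k+c+(j+k) = 2*j+2*k+c by omega] at R6
  have h2le : 2 ≤ p := hp.out.two_le
  have R7 := fact_flip (p := p) c (2*j+2*k+c) (by omega)
  have R8 := fact_flip (p := p) (j+c) (j+2*k+c) (by omega)
  have R9 := fact_flip (p := p) (j+2*c) (j+2*k) (by omega)
  rw [neg_one_pow_congr (show (j+2*c+1) % 2 = (j+1) % 2 by omega)] at R9
  have RL := fact_flip (p := p) (j+k+c) (j+k+c) (by omega)
  have hLne : L ≠ 0 := fact_ne (p := p) (by omega)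
  have S1 : (-1 : ZMod p)^c * 4^(j+2*k) * G1 * H * E * F * (L*L)
      = (-1 : ZMod p)^c * 4^(j+2*k) * (-1)^(j+1) * E * F * (-1)^(j+k+c+1) := by
    rw [← R9, ← RL]; ring
  have S2 : (-1 : ZMod p)^(j+k) * I * A * B * D * (L*L)
      = (-1 : ZMod p)^(j+k) * 4^(j+k) * 4^k * E * F * (-1)^(c+1) * (-1)^(j+c+1) := by
    linear_combination ((-1 : ZMod p)^(j+k) * A * B * D * L) * R6
      + ((-1 : ZMod p)^(j+k) * A * B * 4^(j+k) * F * K) * R5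
      + ((-1 : ZMod p)^(j+k) * 4^(j+k) * 4^k * E * F * J * B) * R7
      + ((-1 : ZMod p)^(j+k) * 4^(j+k) * 4^k * E * F * (-1)^(c+1)) * R8
  have Eq1 : (-1 : ZMod p)^c * 4^(j+2*k) * G1 * H * E * F
      = (-1 : ZMod p)^(j+k) * I * A * B * D := by
    apply mul_right_cancel₀ (mul_ne_zero hLne hLne)
    linear_combination S1 - S2
  have hMne : A * B * C2 * D * E * F ≠ 0 := by
    refine mul_ne_zero (mul_ne_zero (mul_ne_zero (mul_ne_zero (mul_ne_zero ?_ ?_) ?_) ?_) ?_) ?_ <;>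
      exact fact_ne (p := p) (by omega)
  apply mul_right_cancel₀ hMne
  linear_combination
    ((-1 : ZMod p)^c * 4^(j+2*k) * E * F * ((((j + 2*k).choose j : ℕ) : ZMod p) * C2 * D)) * R1
    + ((-1 : ZMod p)^c * 4^(j+2*k) * E * F * G1) * R2
    + Eq1
    + (-((-1 : ZMod p)^(j+k) * A * B * D * ((((2*j + 2*k).choose (j + 2*k) : ℕ) : ZMod p)) * C2)) * R3
    + (-((-1 : ZMod p)^(j+k) * A * B * D)) * R4

def Qsum (p r : ℕ) (u α : ZMod p) : ZMod p :=
  ∑ k ∈ Finset.range (r + 1),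
    (-1 : ZMod p) ^ k * (r.choose k : ZMod p) * (((2*r - 2*k).choose r : ℕ) : ZMod p)
      * u ^ (r - 2*k) * α ^ k

lemma central_coeff {R : Type*} [CommRing R] (d : R) (m : ℕ) :
    ((X^2 + C d)^m).coeff m
      = if m % 2 = 0 then (m.choose (m/2) : R) * d^(m/2) else 0 := by
  rw [add_pow, finset_sum_coeff]
  have hterm : ∀ l ∈ Finset.range (m+1),
      ((X^2)^l * (C d)^(m-l) * ((m.choose l : ℕ) : R[X])).coeff m
        = (if m = 2*l then (1:R) else 0) * d^(m-l) * (m.choose l : R) := by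
    intro l _
    rw [← pow_mul, ← C_pow, ← C_eq_natCast, coeff_mul_C, coeff_mul_C, coeff_X_pow]
  rw [Finset.sum_congr rfl hterm]
  by_cases hpar : m % 2 = 0
  · rw [if_pos hpar]
    rw [Finset.sum_eq_single (m/2)]
    · rw [if_pos (by omega), one_mul, show m - m/2 = m/2 by omega]
      ring
    · intro b _ hb
      rw [if_neg (by omega), zero_mul, zero_mul]
    · intro habs
      exact absurd (Finset.mem_range.mpr (by omega)) habs
  · rw [if_neg hpar]
    apply Finset.sum_eq_zero
    intro l _
    rw [if_neg (by omega), zero_mul, zero_mul]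

lemma lemA (p r : ℕ) [Fact p.Prime] (u α : ZMod p) :
    sCoef p r u α = (-1) ^ r * Qsum p r u α := by
  have way1 : (((X + C u)^2 - C α)^r).coeff r = Qsum p r u α := by
    have e : ((X + C u)^2 - C α)^r
        = ∑ k ∈ Finset.range (r+1), ((X + C u)^2)^k * (C (-α))^(r-k) * ((r.choose k : ℕ) : (ZMod p)[X]) := by
      rw [← add_pow]
      rw [C_neg]
      ring
    rw [e, finset_sum_coeff]
    have hterm : ∀ k ∈ Finset.range (r+1),
        (((X + C u)^2)^k * (C (-α))^(r-k) * ((r.choose k : ℕ) : (ZMod p)[X])).coeff r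
          = u^(2*k - r) * ((2*k).choose r : ZMod p) * (-α)^(r-k) * (r.choose k : ZMod p) := by
      intro k _
      rw [← pow_mul, ← C_pow, ← C_eq_natCast, coeff_mul_C, coeff_mul_C, coeff_X_add_C_pow]
    rw [Finset.sum_congr rfl hterm]
    rw [← Finset.sum_range_reflect]
    unfold Qsum
    apply Finset.sum_congr rfl
    intro k hk
    have hkr : k ≤ r := by
      have := Finset.mem_range.mp hk; omega
    rw [show r + 1 - 1 - k = r - k by omega]
    rw [show 2*(r-k) = 2*r - 2*k by omega]
    rw [show r - (r - k) = k by omega]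
    rw [Nat.choose_symm hkr]
    rw [show 2*r - 2*k - r = r - 2*k by omega]
    rw [neg_pow]
    ring
  have way2 : sCoef p r u α = (-1)^r * (((X + C u)^2 - C α)^r).coeff r := by
    have e2 : ((X + C u)^2 - C α)^r
        = ∑ i ∈ Finset.range (r+1),
            (C (2*u) * X)^i * (X^2 + C (u^2 - α))^(r-i) * ((r.choose i : ℕ) : (ZMod p)[X]) := by
      rw [← add_pow]
      simp only [map_mul, map_ofNat, map_sub, map_pow]
      ring
    rw [e2, finset_sum_coeff]
    have hterm : ∀ i ∈ Finset.range (r+1),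
        ((C (2*u) * X)^i * (X^2 + C (u^2 - α))^(r-i) * ((r.choose i : ℕ) : (ZMod p)[X])).coeff r
          = (2*u)^i * (r.choose i : ZMod p)
            * (if (r-i) % 2 = 0 then ((r-i).choose ((r-i)/2) : ZMod p) * (u^2-α)^((r-i)/2) else 0) := by
      intro i hi
      have hir : i ≤ r := by have := Finset.mem_range.mp hi; omega
      rw [mul_pow, ← C_pow, ← C_eq_natCast]
      rw [show C ((2*u)^i) * X^i * (X^2 + C (u^2-α))^(r-i) * C ((r.choose i : ℕ) : ZMod p)
            = (X^2 + C (u^2-α))^(r-i) * X^i * C ((2*u)^i) * C ((r.choose i : ℕ) : ZMod p) from by ring]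
      rw [coeff_mul_C, coeff_mul_C, coeff_mul_X_pow', if_pos hir, central_coeff]
      ring
    rw [Finset.sum_congr rfl hterm]
    unfold sCoef
    rw [Finset.sum_filter]
    rw [Finset.mul_sum, Finset.mul_sum]
    apply Finset.sum_congr rfl
    intro i hi
    have hir : i ≤ r := by have := Finset.mem_range.mp hi; omega
    by_cases hpar : i % 2 = r % 2
    · rw [if_pos hpar, if_pos (by omega)]
      have hneg : (-1 : ZMod p)^((r-i)/2) * (α - u^2)^((r-i)/2) = (u^2 - α)^((r-i)/2) := by
        rw [← mul_pow]
        congr 1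
        ring
      linear_combination ((-1:ZMod p))^r * (r.choose i : ZMod p) * (((r-i).choose ((r-i)/2) : ℕ) : ZMod p) * (2*u)^i * hneg
    · rw [if_neg hpar, if_neg (by omega)]
      ring
  rw [way2, way1]

lemma lemB (p : ℕ) [hp : Fact p.Prime] (hodd : Odd p) (r : ℕ) (hr : r ≤ p - 1)
    (u α : ZMod p) (hα : α ≠ 0) (hns : ¬ IsSquare α) :
    (-1 : ZMod p)^r * (4*α)^r * tCoef p r u α = Qsum p r u α := by
  have h2le : 2 ≤ p := hp.out.two_le
  have hp2 : p % 2 = 1 := Nat.odd_iff.mp hodd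
  have hEuler : α ^ (p / 2) = -1 := euler_ns hodd hα hns
  set s := p - 1 - r with hs
  have hrs : r + s = p - 1 := by omega
  have hQ : Qsum p r u α
      = ∑ k ∈ (Finset.range (r+1)).filter (fun k => 2*k ≤ r ∧ r ≤ s + 2*k),
          (-1 : ZMod p)^k * (r.choose k : ZMod p) * (((2*r - 2*k).choose r : ℕ) : ZMod p)
            * u^(r - 2*k) * α^k := by
    unfold Qsum
    rw [Finset.sum_filter_of_ne]
    intro k hk hne
    rw [Finset.mem_range] at hk
    constructor
    · by_contra hlt
      rw [Nat.choose_eq_zero_of_lt (show 2*r - 2*k < r by omega)] at hne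
      simp at hne
    · by_contra hlt
      have hdvd : p ∣ (2*r - 2*k).choose r :=
        Nat.Prime.dvd_choose hp.out (by omega) (by omega) (by omega)
      rw [(ZMod.natCast_eq_zero_iff _ p).mpr hdvd] at hne
      simp at hne
  have hT : tCoef p r u α
      = - ∑ j ∈ ((Finset.range (s+1)).filter (fun j => j % 2 = s % 2)).filter (fun j => j ≤ r),
          (-1 : ZMod p)^((s-j)/2) * (s.choose ((s-j)/2) : ZMod p) * (r.choose j : ZMod p)
            * α^((s-j)/2) * u^j := by
    unfold tCoef
    simp only [← hs]
    congr 1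
    refine (Finset.sum_filter_of_ne ?_).symm
    intro j hj hne
    by_contra hlt
    rw [Nat.choose_eq_zero_of_lt (show r < j by omega)] at hne
    simp at hne
  rw [hQ, hT]
  have hbij : ∑ k ∈ (Finset.range (r+1)).filter (fun k => 2*k ≤ r ∧ r ≤ s + 2*k),
          (-1 : ZMod p)^k * (r.choose k : ZMod p) * (((2*r - 2*k).choose r : ℕ) : ZMod p)
            * u^(r - 2*k) * α^k
      = ∑ j ∈ ((Finset.range (s+1)).filter (fun j => j % 2 = s % 2)).filter (fun j => j ≤ r),
          (-1 : ZMod p)^(r+1) * (4*α)^r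
            * ((-1 : ZMod p)^((s-j)/2) * (s.choose ((s-j)/2) : ZMod p) * (r.choose j : ZMod p)
              * α^((s-j)/2) * u^j) := by
    apply Finset.sum_nbij' (i := fun k => r - 2*k) (j := fun j => (r - j)/2)
    · intro k hk
      simp only [Finset.mem_filter, Finset.mem_range] at hk ⊢
      omega
    · intro j hj
      simp only [Finset.mem_filter, Finset.mem_range] at hj ⊢
      omega
    · intro k hk
      simp only [Finset.mem_filter, Finset.mem_range] at hk
      omega
    · intro j hj
      simp only [Finset.mem_filter, Finset.mem_range] at hj
      omega
    · intro k hk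
      simp only [Finset.mem_filter, Finset.mem_range] at hk
      set w := (s - (r - 2*k))/2 with hw
      have hww : 2*w = s - (r - 2*k) := by omega
      have hTL := TL (p := p) (r - 2*k) k w (by omega)
      rw [show r - 2*k + 2*w = s by omega, show r - 2*k + 2*k = r by omega,
          show 2*(r - 2*k) + 2*k = 2*r - 2*k by omega] at hTL
      have hα2 : α^r * α^w = - α^k := by
        have he : r + w = p/2 + k := by omega
        rw [← pow_add, he, pow_add, hEuler]; ring
      have hsgn : (-1 : ZMod p)^r * (-1 : ZMod p)^(r - 2*k + k) = (-1 : ZMod p)^k := by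
        rw [← pow_add]; exact neg_one_pow_congr (by omega)
      rw [mul_pow]
      linear_combination (-(((-1 : ZMod p))^r * u^(r-2*k) * α^k)) * hTL
        + (-(((-1 : ZMod p))^(r+1) * 4^r * (-1 : ZMod p)^w * (s.choose w : ZMod p)
            * (r.choose (r-2*k) : ZMod p) * u^(r-2*k))) * hα2
        + (-((r.choose k : ZMod p) * (((2*r-2*k).choose r : ℕ) : ZMod p) * u^(r-2*k) * α^k)) * hsgn
  rw [hbij, ← Finset.mul_sum]
  ring

lemma legendre_eval (p r : ℕ) [Fact p.Prime] (E : Type*) [Field E] [CharP E p]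
    (u α : ZMod p) (β : E) (hβ : β ^ 2 = ZMod.castHom dvd_rfl E α) (hβ0 : β ≠ 0)
    (h2 : (2 : E) ≠ 0) :
    (2 * β)^r * Polynomial.eval (ZMod.castHom dvd_rfl E u * β⁻¹) (legendreMod E r)
      = ZMod.castHom dvd_rfl E (Qsum p r u α) := by
  have hRHS : ZMod.castHom dvd_rfl E (Qsum p r u α)
      = ∑ k ∈ Finset.range (r + 1),
          (-1 : E)^k * (r.choose k : E) * (((2*r - 2*k).choose r : ℕ) : E)
            * (ZMod.castHom dvd_rfl E u)^(r - 2*k) * (β^2)^k := by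
    unfold Qsum
    rw [map_sum]
    apply Finset.sum_congr rfl
    intro k _
    rw [map_mul, map_mul, map_mul, map_mul, map_pow, map_pow, map_pow, map_neg, map_one,
      map_natCast, map_natCast, hβ]
  rw [hRHS]
  rw [← Finset.sum_subset (Finset.range_subset_range.mpr (show r/2 + 1 ≤ r + 1 by omega))
    (fun k _ hk => by
      rw [Finset.mem_range, not_lt] at hk
      rw [Nat.choose_eq_zero_of_lt (show 2*r - 2*k < r by
        rw [Finset.mem_range] at *; omega)]
      simp)]
  unfold legendreMod
  rw [eval_mul, eval_C, Polynomial.eval_finset_sum]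
  simp only [eval_mul, eval_C, eval_pow, eval_X]
  rw [mul_pow, show (2:E)^r * β^r * (((2 : E) ^ r)⁻¹
      * (∑ k ∈ Finset.range (r/2 + 1), (-1 : E)^k * (r.choose k : E) * (((2*r - 2*k).choose r : ℕ) : E)
        * (ZMod.castHom dvd_rfl E u * β⁻¹)^(r - 2*k)))
    = ((2:E)^r * ((2 : E) ^ r)⁻¹)
      * (β^r * (∑ k ∈ Finset.range (r/2 + 1), (-1 : E)^k * (r.choose k : E) * (((2*r - 2*k).choose r : ℕ) : E)
        * (ZMod.castHom dvd_rfl E u * β⁻¹)^(r - 2*k))) from by ring]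
  rw [mul_inv_cancel₀ (pow_ne_zero r h2), one_mul, Finset.mul_sum]
  apply Finset.sum_congr rfl
  intro k hk
  rw [Finset.mem_range] at hk
  have hsplit : β ^ r = β^(2*k) * β^(r - 2*k) := by
    rw [← pow_add]; congr 1; omega
  have hcancel : β^(r - 2*k) * (β⁻¹)^(r - 2*k) = 1 := by
    rw [← mul_pow, mul_inv_cancel₀ hβ0, one_pow]
  have hb2 : ((β^2)^k : E) = β^(2*k) := by rw [← pow_mul]
  rw [hb2, mul_pow, hsplit]
  linear_combination (β^(2*k) * ((-1 : E)^k * (r.choose k : E) * (((2*r - 2*k).choose r : ℕ) : E))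
    * (ZMod.castHom dvd_rfl E u)^(r - 2*k)) * hcancel

theorem st_eq_legendre_sq' (p : ℕ) [Fact p.Prime] (hodd : Odd p)
    (u α : ZMod p) (hα : α ≠ 0) (hns : ¬ IsSquare α)
    (E : Type*) [Field E] [CharP E p] (β : E)
    (hβ : β ^ 2 = ZMod.castHom dvd_rfl E α)
    (r : ℕ) (hr : r ≤ p - 1) :
    ZMod.castHom dvd_rfl E (sCoef p r u α * tCoef p r u α) =
      (Polynomial.eval (ZMod.castHom dvd_rfl E u * β⁻¹) (legendreMod E r)) ^ 2 := by
  have h2le : 2 ≤ p := (Fact.out : p.Prime).two_le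
  have hp2 : p % 2 = 1 := Nat.odd_iff.mp hodd
  have hinj : Function.Injective (ZMod.castHom (dvd_rfl : p ∣ p) E) :=
    (ZMod.castHom dvd_rfl E).injective
  have h2z : (2 : ZMod p) ≠ 0 := by
    intro hh
    have h2n : ((2 : ℕ) : ZMod p) = 0 := by exact_mod_cast hh
    have := (ZMod.natCast_eq_zero_iff 2 p).mp h2n
    have := Nat.le_of_dvd (by norm_num) this
    omega
  have hφα : ZMod.castHom (dvd_rfl : p ∣ p) E α ≠ 0 := fun h => hα (hinj (by rw [h, map_zero]))
  have hβ0 : β ≠ 0 := by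
    intro h
    apply hφα
    rw [← hβ, h]
    ring
  have h2E : (2 : E) ≠ 0 := by
    intro h
    apply h2z
    apply hinj
    rw [map_ofNat, map_zero, h]
  have LA := legendre_eval p r E u α β hβ hβ0 h2E
  have kA := lemA p r u α
  have kB := lemB p hodd r hr u α hα hns
  have key : (sCoef p r u α * tCoef p r u α) * (4*α)^r = Qsum p r u α ^ 2 := by
    rw [kA]
    linear_combination (Qsum p r u α) * kB
  have h4z : ((4:ZMod p)*α) ≠ 0 := by
    apply mul_ne_zero _ hα
    intro h4
    apply h2z
    have : (4 : ZMod p) = 2 * 2 := by norm_num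
    rw [this] at h4
    rcases mul_eq_zero.mp h4 with h | h <;> exact h
  have hφ4 : ZMod.castHom (dvd_rfl : p ∣ p) E ((4*α)^r) = ((2*β)^2)^r := by
    rw [map_pow, map_mul, map_ofNat, ← hβ]
    ring_nf
  have hc : ZMod.castHom (dvd_rfl : p ∣ p) E ((4*α)^r) ≠ 0 := by
    intro h
    exact pow_ne_zero r h4z (hinj (by rw [h, map_zero]))
  apply mul_right_cancel₀ hc
  have e1 : ZMod.castHom (dvd_rfl : p ∣ p) E (sCoef p r u α * tCoef p r u α)
        * ZMod.castHom (dvd_rfl : p ∣ p) E ((4*α)^r)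
      = (ZMod.castHom (dvd_rfl : p ∣ p) E (Qsum p r u α))^2 := by
    rw [← map_mul, key, map_pow]
  have e2 : (Polynomial.eval (ZMod.castHom dvd_rfl E u * β⁻¹) (legendreMod E r))^2
        * ZMod.castHom (dvd_rfl : p ∣ p) E ((4*α)^r)
      = (ZMod.castHom (dvd_rfl : p ∣ p) E (Qsum p r u α))^2 := by
    rw [hφ4, pow_right_comm, ← LA]
    ring
  rw [e1, e2]

end StAux

/-- For an odd prime `p`, `u ∈ F_p`, a nonsquare `α ∈ F_p^×`, a field `E` of characteristic `p`
and `β ∈ E` with `β² = α`, for every `0 ≤ r ≤ p-1` one has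
`s_r(u,α) · t_r(u,α) = (P̄_r(u·β⁻¹))²` in `E`. -/
theorem st_eq_legendre_sq (p : ℕ) [Fact p.Prime] (hodd : Odd p)
    (u α : ZMod p) (hα : α ≠ 0) (hns : ¬ IsSquare α)
    (E : Type*) [Field E] [CharP E p] (β : E)
    (hβ : β ^ 2 = ZMod.castHom dvd_rfl E α)
    (r : ℕ) (hr : r ≤ p - 1) :
    ZMod.castHom dvd_rfl E (sCoef p r u α * tCoef p r u α) =
      (Polynomial.eval (ZMod.castHom dvd_rfl E u * β⁻¹) (legendreMod E r)) ^ 2 := by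
  exact StAux.st_eq_legendre_sq' p hodd u α hα hns E β hβ r hr
end

section
/- Let p be an odd prime, let r ≥ 0 be an integer, let u ∈ F_p and α ∈ F_p^×, let E be a field of characteristic p, and let β ∈ E be an element with β² equal to the image of α in E. Then s_r(u,α) = (-1)^r · 2^r · β^r · P̄_r(u·β^{-1}) in E, where s_r(u,α) is viewed in E via the embedding of F_p. -/
open Polynomial

/-!
Both sides are, up to the sign `(-1)^r`, the coefficient of `X^r` in `((X + u)^2 - α)^r`.
Expanding this power binomially in `(u^2 - α) + X (X + 2u)` gives the sum defining `s_r(u, α)`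
(after reindexing by `j = (r - i)/2`); expanding it in `(X + u)^2` and `-α` gives the coefficients
of `2^r P_r`, homogenised by `β^2 = α`.
-/

open Finset

lemma sum_range_div_two_succ_eq_sum_range_succ {M : Type*} [AddCommMonoid M] (r : ℕ)
    {f : ℕ → M} (hf : ∀ k ≤ r, r < 2 * k → f k = 0) :
    ∑ k ∈ range (r / 2 + 1), f k = ∑ k ∈ range (r + 1), f k :=
  sum_subset (range_subset_range.mpr (by omega)) fun k hk hk' => by
    simp only [mem_range] at hk hk'
    exact hf k (by omega) (by omega)

section

variable {R : Type*} [CommRing R] (a b : R) (r : ℕ)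

lemma coeff_sq_sub_pow_self_eq_sum_choose_two_mul :
    (((X + C a) ^ 2 - C b) ^ r).coeff r =
      ∑ k ∈ range (r + 1),
        (-1) ^ k * (r.choose k : R) * ((2 * r - 2 * k).choose r : R) * a ^ (r - 2 * k) *
          b ^ k := by
  rw [sub_eq_neg_add, ← C_neg, add_pow, finsetSum_coeff]
  refine sum_congr rfl fun k hk => ?_
  rw [← C_pow, ← pow_mul, ← C_eq_natCast, mul_comm, ← mul_assoc, ← C_mul, coeff_C_mul,
    coeff_X_add_C_pow, Nat.mul_sub, show 2 * r - 2 * k - r = r - 2 * k by omega, neg_pow]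
  ring

lemma coeff_sq_sub_pow_self_eq_sum_choose_sub :
    (((X + C a) ^ 2 - C b) ^ r).coeff r =
      ∑ j ∈ range (r + 1),
        (r.choose j : R) * ((r - j).choose j : R) * (a ^ 2 - b) ^ j * (2 * a) ^ (r - 2 * j) := by
  have hsplit : (X + C a) ^ 2 - C b = C (a ^ 2 - b) + X * (X + C (2 * a)) := by
    simp only [C_sub, C_pow, C_mul, C_ofNat]
    ring
  rw [hsplit, add_pow, finsetSum_coeff]
  refine sum_congr rfl fun j hj => ?_
  have hjr : j ≤ r := Nat.lt_succ_iff.mp (mem_range.mp hj)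
  rw [← C_pow, ← C_eq_natCast, mul_pow, mul_comm, ← mul_assoc, ← C_mul, coeff_C_mul,
    coeff_X_pow_mul', if_pos (Nat.sub_le r j), coeff_X_add_C_pow, Nat.sub_sub_self hjr,
    Nat.sub_sub, ← two_mul]
  ring

theorem sum_choose_mul_choose_sub_eq_sum_choose_two_mul :
    ∑ j ∈ range (r + 1),
        (r.choose j : R) * ((r - j).choose j : R) * (a ^ 2 - b) ^ j * (2 * a) ^ (r - 2 * j) =
      ∑ k ∈ range (r + 1),
        (-1) ^ k * (r.choose k : R) * ((2 * r - 2 * k).choose r : R) * a ^ (r - 2 * k) *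
          b ^ k := by
  rw [← coeff_sq_sub_pow_self_eq_sum_choose_sub, coeff_sq_sub_pow_self_eq_sum_choose_two_mul]

end

lemma sCoef_eq_sum_choose_mul_choose_sub (p r : ℕ) (u α : ZMod p) :
    sCoef p r u α = (-1) ^ r * ∑ j ∈ range (r + 1),
      (r.choose j : ZMod p) * ((r - j).choose j : ZMod p) * (u ^ 2 - α) ^ j *
        (2 * u) ^ (r - 2 * j) := by
  rw [sCoef, ← sum_range_div_two_succ_eq_sum_range_succ r fun j _ hj => by
    rw [Nat.choose_eq_zero_of_lt (by omega : r - j < j)]; simp]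
  congr 1
  refine sum_nbij' (fun i => (r - i) / 2) (fun j => r - 2 * j) ?_ ?_ ?_ ?_ ?_
  all_goals intro i hi; simp only [mem_filter, mem_range] at hi ⊢
  any_goals omega
  obtain ⟨j, hj, rfl⟩ : ∃ j, 2 * j ≤ r ∧ i = r - 2 * j :=
    ⟨(r - i) / 2, by omega, by omega⟩
  have hchoose : (r.choose (r - 2 * j) : ZMod p) * ((2 * j).choose j : ℕ) =
      r.choose j * (r - j).choose j := by
    rw [Nat.choose_symm hj, ← Nat.cast_mul, Nat.choose_mul (by omega), two_mul,
      Nat.add_sub_cancel, Nat.cast_mul]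
  have hsign : (u ^ 2 - α) ^ j = (-1) ^ j * (α - u ^ 2) ^ j := by
    rw [← neg_sub, neg_pow]
  rw [Nat.sub_sub_self hj, Nat.mul_div_cancel_left j two_pos, hsign]
  linear_combination (-1) ^ j * (α - u ^ 2) ^ j * (2 * u) ^ (r - 2 * j) * hchoose

lemma two_pow_mul_pow_mul_eval_legendreMod {E : Type*} [Field E] (h2 : (2 : E) ≠ 0) {β : E}
    (hβ : β ≠ 0) (x : E) (r : ℕ) :
    2 ^ r * β ^ r * (legendreMod E r).eval (x * β⁻¹) =
      ∑ k ∈ range (r + 1),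
        (-1) ^ k * (r.choose k : E) * ((2 * r - 2 * k).choose r : E) * x ^ (r - 2 * k) *
          (β ^ 2) ^ k := by
  rw [← sum_range_div_two_succ_eq_sum_range_succ r fun k _ hk => by
    rw [Nat.choose_eq_zero_of_lt (by omega : 2 * r - 2 * k < r)]; simp]
  simp only [legendreMod, eval_mul, eval_C, eval_finsetSum, eval_pow, eval_X]
  rw [mul_comm (2 ^ r : E), mul_assoc, mul_inv_cancel_left₀ (pow_ne_zero r h2), mul_sum]
  refine sum_congr rfl fun k hk => ?_
  have hβr : β ^ r = β ^ (r - 2 * k) * (β ^ 2) ^ k := by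
    rw [← pow_mul, ← pow_add, Nat.sub_add_cancel (by simp at hk; omega)]
  rw [hβr, mul_pow, inv_pow]
  field_simp

/-- For an odd prime `p`, `r ≥ 0`, `u ∈ F_p`, `α ∈ F_p^×`, a field `E` of characteristic `p`
and `β ∈ E` with `β² = α`, one has `s_r(u,α) = (-1)^r · 2^r · β^r · P̄_r(u·β⁻¹)` in `E`. -/
theorem sCoef_eq_legendre (p : ℕ) [Fact p.Prime] (hodd : Odd p)
    (r : ℕ) (u α : ZMod p) (hα : α ≠ 0)
    (E : Type*) [Field E] [CharP E p] (β : E)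
    (hβ : β ^ 2 = ZMod.castHom dvd_rfl E α) :
    ZMod.castHom dvd_rfl E (sCoef p r u α) =
      (-1) ^ r * 2 ^ r * β ^ r *
        Polynomial.eval (ZMod.castHom dvd_rfl E u * β⁻¹) (legendreMod E r) := by
  have h2 : (2 : E) ≠ 0 := Ring.two_ne_zero (ringChar.eq E p ▸ hodd.ne_two_of_dvd_nat dvd_rfl)
  have hβ0 : β ≠ 0 := ne_zero_pow two_ne_zero (hβ ▸ (_root_.map_ne_zero _).mpr hα)
  rw [mul_assoc, mul_assoc, ← mul_assoc (2 ^ r),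
    two_pow_mul_pow_mul_eval_legendreMod h2 hβ0, hβ,
    ← sum_choose_mul_choose_sub_eq_sum_choose_two_mul, sCoef_eq_sum_choose_mul_choose_sub]
  simp only [map_mul, map_sum, map_pow, map_sub, map_natCast, map_ofNat, map_neg, map_one]
end

section
/- Let p be an odd prime, let m ≥ 2 be an integer, let q = p^m, and let α ∈ F_q^× be a nonsquare. Then there exists u ∈ F_q^× such that for every integer r with 0 ≤ r ≤ (q-1)/2 and every β ∈ F_{q²} with β² = α (viewing F_q ⊆ F_{q²}), the image of the mod-p Legendre polynomial P̄_r in F_{q²}[X] does not vanish at u·β^{-1}. -/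
/-!
In characteristic `p`, Rodrigues' formula `2ʳ Pᵣ = D⁽ʳ⁾ (X² - 1)ʳ` with the Hasse derivative `D⁽ʳ⁾`,
together with `(X² - 1)ᵖ = X²ᵖ - 1` and Lucas' theorem, gives the factorisation
`P̄_{pa+b} = P̄_a(Xᵖ) · P̄_b` for `b < p`. Hence if `P̄_r(z) = 0` with `r < q = pᵐ`, then
`P̄_j(z^{pⁱ}) = 0` for some base-`p` digit `j < p` and some `i < m`. Since `P̄_j(1) = 1`, each of
the `m · p` functions `u ↦ P̄_j((u/β)^{pⁱ})` has at most `j` zeros in `F_q`, which excludes at most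
`m · p(p-1)/2 < q - 1` values of `u`. The two square roots `±β` are handled together because
`P̄_r(-z) = (-1)ʳ P̄_r(z)`.
-/

open Polynomial

theorem CharP.natCast_choose_eq_choose_mod_mul_choose_div {R : Type*} [AddMonoidWithOne R]
    (p : ℕ) [Fact p.Prime] [CharP R p] (n k : ℕ) :
    (n.choose k : R) = ((n % p).choose (k % p) * (n / p).choose (k / p) : ℕ) :=
  CharP.natCast_eq_natCast' R p Choose.choose_modEq_choose_mod_mul_choose_div_nat

namespace Polynomial

variable {p : ℕ} [Fact p.Prime]

section CommSemiring

variable {R : Type*} [CommSemiring R] [CharP R p]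

theorem hasseDeriv_expand_of_not_dvd {k : ℕ} (hk : ¬ p ∣ k) (f : R[X]) :
    hasseDeriv k (expand R p f) = 0 := by
  induction f using Polynomial.induction_on' with
  | add f g hf hg => rw [map_add, map_add, hf, hg, add_zero]
  | monomial n r =>
    have hkp : k % p ≠ 0 := fun h => hk (Nat.dvd_of_mod_eq_zero h)
    rw [expand_monomial, hasseDeriv_monomial, CharP.natCast_choose_eq_choose_mod_mul_choose_div p,
      Nat.mul_mod_left, Nat.choose_eq_zero_of_lt (Nat.pos_of_ne_zero hkp)]
    simp

theorem hasseDeriv_expand_eq_expand_hasseDeriv (n : ℕ) (f : R[X]) :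
    hasseDeriv (p * n) (expand R p f) = expand R p (hasseDeriv n f) := by
  have hp := (Fact.out : p.Prime).pos
  induction f using Polynomial.induction_on' with
  | add f g hf hg => rw [map_add, map_add, hf, hg, map_add, map_add]
  | monomial q r =>
    rw [expand_monomial, hasseDeriv_monomial, hasseDeriv_monomial, expand_monomial,
      CharP.natCast_choose_eq_choose_mod_mul_choose_div p, Nat.mul_mod_left, Nat.mul_mod_right,
      Nat.mul_div_cancel _ hp, Nat.mul_div_cancel_left _ hp, Nat.sub_mul, mul_comm n]
    simp

theorem hasseDeriv_expand_mul {a b : ℕ} (hb : b < p) (f : R[X]) {g : R[X]}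
    (hg : g.natDegree < p + b) :
    hasseDeriv (p * a + b) (expand R p f * g) = expand R p (hasseDeriv a f) * hasseDeriv b g := by
  rw [hasseDeriv_mul, Finset.sum_eq_single (p * a, b), hasseDeriv_expand_eq_expand_hasseDeriv]
  · rintro ⟨i, j⟩ hij hne
    rw [Finset.HasAntidiagonal.mem_antidiagonal] at hij
    by_cases hpi : p ∣ i
    · obtain ⟨i, rfl⟩ := hpi
      rcases lt_trichotomy i a with hia | rfl | hai
      · have : p * (i + 1) ≤ p * a := Nat.mul_le_mul_left p hia
        rw [hasseDeriv_eq_zero_of_lt_natDegree g j (by linarith), mul_zero]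
      · exact absurd (by rw [Prod.mk.injEq]; constructor <;> linarith) hne
      · have : p * (a + 1) ≤ p * i := Nat.mul_le_mul_left p hai
        linarith
    · rw [hasseDeriv_expand_of_not_dvd hpi, zero_mul]
  · simp

end CommSemiring

theorem X_sq_sub_one_pow_mul_add {R : Type*} [CommRing R] [CharP R p] (a b : ℕ) :
    ((X ^ 2 - 1 : R[X])) ^ (p * a + b) = expand R p ((X ^ 2 - 1) ^ a) * (X ^ 2 - 1) ^ b := by
  rw [pow_add, pow_mul, sub_pow_char, one_pow, map_pow, map_sub, map_pow,
    expand_X, map_one, ← pow_mul, ← pow_mul, mul_comm p]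

end Polynomial

section Legendre

variable {E : Type*} [Field E]

theorem natDegree_X_sq_sub_one_pow_le (r : ℕ) : ((X ^ 2 - 1 : E[X]) ^ r).natDegree ≤ 2 * r := by
  rw [mul_comm]
  exact natDegree_pow_le_of_le r (by rw [← C_1, natDegree_X_pow_sub_C])

theorem legendreMod_eq_hasseDeriv (r : ℕ) :
    legendreMod E r = C ((2 ^ r : E)⁻¹) * hasseDeriv r ((X ^ 2 - 1) ^ r) := by
  have hterm (k : ℕ) : hasseDeriv r (C ((-1 : E) ^ k * r.choose k) * X ^ (2 * (r - k))) =
      C ((-1 : E) ^ k * (r.choose k : E) * (((2 * r - 2 * k).choose r : ℕ) : E)) *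
        X ^ (r - 2 * k) := by
    rw [C_mul_X_pow_eq_monomial, hasseDeriv_monomial, ← C_mul_X_pow_eq_monomial,
      show 2 * (r - k) = 2 * r - 2 * k by omega, show 2 * r - 2 * k - r = r - 2 * k by omega,
      mul_comm ((2 * r - 2 * k).choose r : E)]
  have hexpand : (X ^ 2 - 1 : E[X]) ^ r =
      ∑ k ∈ Finset.range (r + 1), C ((-1 : E) ^ k * r.choose k) * X ^ (2 * (r - k)) := by
    rw [← neg_add_eq_sub, add_pow]
    refine Finset.sum_congr rfl fun k _ => ?_
    simp only [map_mul, map_pow, map_neg, map_one, map_natCast, pow_mul]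
    ring
  rw [legendreMod, hexpand, map_sum]
  simp_rw [hterm]
  congr 1
  refine Finset.sum_subset (Finset.range_subset_range.mpr (by omega)) fun k hkr hk => ?_
  rw [Finset.mem_range] at hkr
  rw [Finset.mem_range, Nat.lt_succ_iff, not_le, Nat.div_lt_iff_lt_mul two_pos] at hk
  rw [Nat.choose_eq_zero_of_lt (n := 2 * r - 2 * k) (by omega)]
  simp

theorem natDegree_legendreMod_le (r : ℕ) : (legendreMod E r).natDegree ≤ r := by
  have hdeg := natDegree_X_sq_sub_one_pow_le (E := E) r
  rw [legendreMod_eq_hasseDeriv]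
  refine (natDegree_C_mul_le _ _).trans ((natDegree_hasseDeriv_le _ _).trans ?_)
  omega

theorem eval_one_legendreMod (h2 : (2 : E) ≠ 0) (r : ℕ) : (legendreMod E r).eval 1 = 1 := by
  have htaylor : taylor 1 ((X ^ 2 - 1 : E[X]) ^ r) = (X + C 2) ^ r * X ^ r := by
    rw [taylor_pow, map_sub, taylor_pow, taylor_X, taylor_one, ← mul_pow]
    congr 1
    simp only [map_one, map_ofNat]
    ring
  rw [legendreMod_eq_hasseDeriv, eval_mul, eval_C, ← taylor_coeff, htaylor, coeff_mul_X_pow',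
    if_pos le_rfl, Nat.sub_self, coeff_zero_eq_eval_zero]
  simp [h2]

theorem legendreMod_ne_zero (h2 : (2 : E) ≠ 0) (r : ℕ) : legendreMod E r ≠ 0 := fun h => by
  simpa [h] using eval_one_legendreMod h2 r

theorem eval_neg_legendreMod (r : ℕ) (z : E) :
    (legendreMod E r).eval (-z) = (-1) ^ r * (legendreMod E r).eval z := by
  simp only [legendreMod, eval_mul, eval_C, eval_finsetSum, eval_X, eval_pow, Finset.mul_sum]
  refine Finset.sum_congr rfl fun k hk => ?_
  rw [Finset.mem_range, Nat.lt_succ_iff, Nat.le_div_iff_mul_le two_pos] at hk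
  have hsign : (-1 : E) ^ r = (-1) ^ (r - 2 * k) := by
    conv_lhs => rw [← Nat.sub_add_cancel (show 2 * k ≤ r by omega)]
    rw [pow_add, pow_mul, neg_one_sq, one_pow, mul_one]
  rw [neg_pow, hsign]
  ring

end Legendre

section LegendreCharP

variable {E : Type*} [Field E] {p : ℕ} [Fact p.Prime] [CharP E p]

theorem legendreMod_mul_add {b : ℕ} (hb : b < p) (a : ℕ) :
    legendreMod E (p * a + b) = expand E p (legendreMod E a) * legendreMod E b := by
  have hdeg : ((X ^ 2 - 1 : E[X]) ^ b).natDegree < p + b := by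
    have := natDegree_X_sq_sub_one_pow_le (E := E) b
    omega
  have htwo : (2 : E) ^ (p * a) = 2 ^ a := by rw [pow_mul, ← frobenius_def (R := E) p, map_ofNat]
  rw [legendreMod_eq_hasseDeriv, legendreMod_eq_hasseDeriv, legendreMod_eq_hasseDeriv,
    X_sq_sub_one_pow_mul_add, hasseDeriv_expand_mul hb _ hdeg, map_mul, expand_C, pow_add, htwo,
    mul_inv, C_mul]
  ring

theorem exists_eval_legendreMod_eq_zero_of_lt_pow {n r : ℕ} (hr : r < p ^ n) {z : E}
    (hz : (legendreMod E r).eval z = 0) :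
    ∃ i < n, ∃ j < p, (legendreMod E j).eval (z ^ p ^ i) = 0 := by
  induction n generalizing r z with
  | zero =>
    obtain rfl : r = 0 := by simpa using hr
    simp [legendreMod] at hz
  | succ n ih =>
    have hp := (Fact.out : p.Prime).pos
    rw [← Nat.div_add_mod r p, legendreMod_mul_add (Nat.mod_lt r hp), eval_mul, expand_eval] at hz
    rcases mul_eq_zero.mp hz with h | h
    · obtain ⟨i, hi, j, hj, hij⟩ := ih (by rwa [Nat.div_lt_iff_lt_mul hp, ← pow_succ]) h
      exact ⟨i + 1, by omega, j, hj, by rwa [pow_succ', pow_mul]⟩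
    · exact ⟨0, n.succ_pos, r % p, Nat.mod_lt r hp, by simpa using h⟩

end LegendreCharP

theorem card_filter_eval_eq_zero_le {F K : Type*} [Fintype F] [CommRing K] [IsDomain K]
    [DecidableEq K] {f : K[X]} (hf : f ≠ 0) {φ : F → K} (hφ : Function.Injective φ) :
    (Finset.univ.filter fun u => f.eval (φ u) = 0).card ≤ f.natDegree :=
  calc _ ≤ f.roots.toFinset.card :=
        Finset.card_le_card_of_injOn φ (fun u hu => by simpa [hf] using hu) hφ.injOn
    _ ≤ Multiset.card f.roots := Multiset.toFinset_card_le _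
    _ ≤ f.natDegree := card_roots' f

theorem Nat.mul_mul_sub_one_lt_two_mul_pow_sub_one {p m : ℕ} (hp : 3 ≤ p) (hm : 2 ≤ m) :
    m * (p * (p - 1)) < 2 * (p ^ m - 1) := by
  induction m, hm using Nat.le_induction with
  | base =>
    have : p * (p - 1) < p ^ 2 - 1 := by
      zify [show 1 ≤ p by omega, show 1 ≤ p ^ 2 by nlinarith]
      nlinarith
    omega
  | succ m hm ih =>
    have hpm : p ≤ p ^ m := Nat.le_self_pow (by omega) p
    zify [show 1 ≤ p by omega, show 1 ≤ p ^ m by omega,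
      Nat.one_le_pow (m + 1) p (by omega)] at ih hpm ⊢
    rw [pow_succ]
    nlinarith [mul_le_mul_of_nonneg_right hpm (show (0 : ℤ) ≤ p - 1 by omega)]

theorem exists_ne_zero_forall_eval_legendreMod_ne_zero {p m : ℕ} [Fact p.Prime] (hodd : Odd p)
    (hm : 2 ≤ m) {F : Type*} [Field F] [Fintype F] (hF : Fintype.card F = p ^ m)
    {E : Type*} [Field E] [CharP E p] [Algebra F E] {c : E} (hc : c ≠ 0) :
    ∃ u : F, u ≠ 0 ∧ ∀ r < p ^ m, (legendreMod E r).eval (algebraMap F E u * c) ≠ 0 := by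
  classical
  have hp3 : 3 ≤ p := by
    have := (Fact.out : p.Prime).two_le
    rcases hodd with ⟨t, rfl⟩
    omega
  have h2 : (2 : E) ≠ 0 := Ring.two_ne_zero (by rw [ringChar.eq E p]; omega)
  let bad : Finset F := (Finset.range m ×ˢ Finset.range p).biUnion fun ij =>
    Finset.univ.filter fun u => (legendreMod E ij.2).eval ((algebraMap F E u * c) ^ p ^ ij.1) = 0
  have hbad : bad.card * 2 ≤ m * (p * (p - 1)) :=
    calc bad.card * 2 ≤ (∑ ij ∈ Finset.range m ×ˢ Finset.range p, ij.2) * 2 := by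
          gcongr
          refine Finset.card_biUnion_le.trans (Finset.sum_le_sum fun ij _ => ?_)
          refine (card_filter_eval_eq_zero_le (legendreMod_ne_zero h2 _) ?_).trans
            (natDegree_legendreMod_le _)
          exact (iterateFrobenius E p ij.1).injective.comp
            ((mul_left_injective₀ hc).comp (algebraMap F E).injective)
      _ = m * (p * (p - 1)) := by
          simp only [Finset.sum_product, Finset.sum_const, Finset.card_range, smul_eq_mul]
          rw [mul_assoc, Finset.sum_range_id_mul_two]
  have hcard : bad.card < (Finset.univ.erase (0 : F)).card := by
    rw [Finset.card_erase_of_mem (Finset.mem_univ _), Finset.card_univ, hF]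
    have := Nat.mul_mul_sub_one_lt_two_mul_pow_sub_one hp3 hm
    omega
  obtain ⟨u, hu, hubad⟩ := Finset.exists_mem_notMem_of_card_lt_card hcard
  refine ⟨u, Finset.ne_of_mem_erase hu, fun r hr hz => hubad ?_⟩
  obtain ⟨i, hi, j, hj, hij⟩ := exists_eval_legendreMod_eq_zero_of_lt_pow hr hz
  exact Finset.mem_biUnion.mpr ⟨(i, j), by simp [hi, hj], by simpa using hij⟩

theorem exists_simultaneous_nonvanishing_general (p m : ℕ) [Fact p.Prime] (hodd : Odd p)
    (hm : 2 ≤ m)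
    (F : Type*) [Field F] [Fintype F] (hF : Fintype.card F = p ^ m)
    (F2 : Type*) [Field F2] [Algebra F F2]
    (α : F) (hα : α ≠ 0) :
    ∃ u : F, u ≠ 0 ∧ ∀ r : ℕ, r ≤ (p ^ m - 1) / 2 →
      ∀ β : F2, β ^ 2 = algebraMap F F2 α →
        Polynomial.eval (algebraMap F F2 u * β⁻¹) (legendreMod F2 r) ≠ 0 := by
  have : CharP F p := charP_of_card_eq_prime_pow hF
  have : CharP F2 p := charP_of_injective_algebraMap (algebraMap F F2).injective p
  by_cases hsqrt : ∃ β₀ : F2, β₀ ^ 2 = algebraMap F F2 α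
  swap
  · exact ⟨1, one_ne_zero, fun r _ β hβ => absurd ⟨β, hβ⟩ hsqrt⟩
  obtain ⟨β₀, hβ₀⟩ := hsqrt
  have hβ₀0 : β₀ ≠ 0 := by
    rintro rfl
    exact hα ((algebraMap F F2).injective (by simpa using hβ₀.symm))
  obtain ⟨u, hu0, hu⟩ := exists_ne_zero_forall_eval_legendreMod_ne_zero hodd hm hF
    (E := F2) (inv_ne_zero hβ₀0)
  refine ⟨u, hu0, fun r hr β hβ => ?_⟩
  have hrq : r < p ^ m := by
    have := Nat.one_le_pow m p (Fact.out : p.Prime).pos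
    omega
  rcases sq_eq_sq_iff_eq_or_eq_neg.mp (hβ.trans hβ₀.symm) with rfl | rfl
  · exact hu r hrq
  · rw [inv_neg, mul_neg, eval_neg_legendreMod]
    exact mul_ne_zero (pow_ne_zero _ (neg_ne_zero.mpr one_ne_zero)) (hu r hrq)

/-- For an odd prime `p`, `m ≥ 2`, `q = p^m`, and a nonsquare `α ∈ F_q^×`, there is a
`u ∈ F_q^×` such that for every `0 ≤ r ≤ (q-1)/2` and every square root `β ∈ F_{q²}` of `α`,
the mod-`p` Legendre polynomial `P̄_r` does not vanish at `u·β⁻¹`. -/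
theorem exists_simultaneous_nonvanishing (p m : ℕ) [Fact p.Prime] (hodd : Odd p)
    (hm : 2 ≤ m)
    (F : Type*) [Field F] [Fintype F] (hF : Fintype.card F = p ^ m)
    (F2 : Type*) [Field F2] [Fintype F2] [Algebra F F2]
    (hF2 : Fintype.card F2 = (p ^ m) ^ 2)
    (α : F) (hα : α ≠ 0) (hns : ¬ IsSquare α) :
    ∃ u : F, u ≠ 0 ∧ ∀ r : ℕ, r ≤ (p ^ m - 1) / 2 →
      ∀ β : F2, β ^ 2 = algebraMap F F2 α →
        Polynomial.eval (algebraMap F F2 u * β⁻¹) (legendreMod F2 r) ≠ 0 :=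
  exists_simultaneous_nonvanishing_general p m hodd hm F hF F2 α hα
end

section
/- Let p be an odd prime. Then in F_p[X] one has the identity Σ_{r=0}^{p-1} P̄_r(X) = ε · (X-1)^{(p-1)/2}, where ε ∈ {1,-1} is the Legendre symbol (-2/p), i.e. ε = 1 if -2 is a square in F_p^× and ε = -1 otherwise. -/
/-!
Modulo `p`, `C(2n, n) ≡ (-4)^n · C(m, n)` for `n < p`, where `m = (p - 1) / 2 ≡ -1/2`. Hence the
coefficient of `X^(n-k)` in `P̄_(n+k)` is `C(m, n) · C(n, k) · (-2)^(n-k)`: below degree `p` in `t`,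
the generating function `(1 - 2Xt + t²)^(-1/2)` of the `P_r` reduces to `(1 + t (t - 2X))^m`.
Summing over `r < p` and applying the binomial theorem twice gives
`Σ_n C(m, n) (1 - 2X)^n = (2 - 2X)^m = (-2)^m (X - 1)^m`, and `(-2)^m = (-2/p)` by Euler's criterion.
-/

open Polynomial Finset
open scoped Classical

theorem Nat.choose_add_mul_choose_eq_centralBinom_mul {n k : ℕ} (hk : k ≤ n) :
    (n + k).choose k * (2 * n).choose (n + k) = n.centralBinom * n.choose k := by
  have h₁ := Nat.choose_mul (n := 2 * n) (k := n + k) (s := k) (by omega)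
  have h₂ := Nat.choose_mul (n := 2 * n) (k := n) (s := k) hk
  have h₃ : (2 * n - k).choose n = (2 * n - k).choose (n - k) := by
    rw [← Nat.choose_symm (by omega), show 2 * n - k - n = n - k by omega]
  rw [Nat.add_sub_cancel] at h₁
  rw [Nat.centralBinom_eq_two_mul_choose, mul_comm, h₁, h₂, h₃]

theorem Finset.sum_range_sum_range_half_eq {M : Type*} [AddCommMonoid M] {N m : ℕ}
    {f : ℕ → ℕ → M} (hN : 2 * m < N) (hf : ∀ n k, m < n → f n k = 0) :
    ∑ r ∈ range N, ∑ k ∈ range (r / 2 + 1), f (r - k) k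
      = ∑ n ∈ range (m + 1), ∑ k ∈ range (n + 1), f n k := by
  rw [sum_sigma', sum_sigma']
  symm
  refine sum_of_injOn (fun x => ⟨x.1 + x.2, x.2⟩) ?_ ?_ ?_ ?_
  · rintro ⟨n, k⟩ - ⟨n', k'⟩ - h
    simp only [Sigma.mk.injEq, heq_eq_eq] at h
    grind
  · rintro ⟨n, k⟩ h
    simp only [coe_sigma, Set.mem_sigma_iff, mem_coe, mem_range] at h ⊢
    omega
  · rintro ⟨r, k⟩ h hr
    simp only [mem_sigma, mem_range] at h
    dsimp only
    refine hf _ _ (not_le.1 fun hle => hr ⟨⟨r - k, k⟩, ?_, ?_⟩)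
    · simp only [coe_sigma, Set.mem_sigma_iff, mem_coe, mem_range]
      omega
    · simp only [Sigma.mk.injEq, heq_eq_eq, and_true]
      omega
  · rintro ⟨n, k⟩ -
    simp

namespace ZMod

variable {p : ℕ} [Fact p.Prime]

theorem two_ne_zero_of_odd (hp : Odd p) : (2 : ZMod p) ≠ 0 :=
  Ring.two_ne_zero <| by
    rw [ringChar_zmod_n]
    rintro rfl
    exact Nat.not_odd_iff_even.2 even_two hp

theorem centralBinom_eq_neg_four_pow_mul_choose (hp : Odd p) {n : ℕ} (hn : n < p) :
    (n.centralBinom : ZMod p) = (-4) ^ n * ((p / 2).choose n : ℕ) := by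
  induction n with
  | zero => simp
  | succ n ih =>
    have hn' : ((n + 1 : ℕ) : ZMod p) ≠ 0 := by
      rw [Ne, natCast_eq_zero_iff]
      exact Nat.not_dvd_of_pos_of_lt n.succ_pos hn
    apply mul_left_cancel₀ hn'
    have hrec := congrArg (Nat.cast : ℕ → ZMod p) n.succ_mul_centralBinom_succ
    push_cast at hrec ⊢
    rw [hrec, ih (by omega)]
    rcases le_or_gt n (p / 2) with hle | hlt
    · have hp2 : 2 * ((p / 2 : ℕ) : ZMod p) + 1 = 0 := by
        have h := congrArg (Nat.cast : ℕ → ZMod p) (Nat.two_mul_div_two_add_one_of_odd hp)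
        push_cast at h
        rw [h, natCast_self]
      have hch := congrArg (Nat.cast : ℕ → ZMod p) ((p / 2).choose_succ_right_eq n)
      push_cast [Nat.cast_sub hle] at hch
      linear_combination (-(-4 : ZMod p) ^ (n + 1)) * hch
        + (2 * (-4 : ZMod p) ^ n * ((p / 2).choose n : ℕ)) * hp2
    · rw [Nat.choose_eq_zero_of_lt hlt, Nat.choose_eq_zero_of_lt (by omega : p / 2 < n + 1)]
      simp

theorem pow_div_two_eq_ite_isSquare {a : ZMod p} (ha : a ≠ 0) :
    a ^ (p / 2) = if IsSquare a then 1 else -1 := by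
  split_ifs with hsq
  · exact (euler_criterion p ha).1 hsq
  · exact (pow_div_two_eq_neg_one_or_one p ha).resolve_left (mt (euler_criterion p ha).2 hsq)

theorem inv_two_pow_mul_legendreCoeff_eq (hp : Odd p) {n k : ℕ} (hk : k ≤ n) (hn : n < p) :
    ((2 : ZMod p) ^ (n + k))⁻¹ * ((-1) ^ k * ((n + k).choose k : ℕ) * ((2 * n).choose (n + k) : ℕ))
      = ((p / 2).choose n : ℕ) * (n.choose k : ℕ) * (-2) ^ (n - k) := by
  rw [inv_mul_eq_iff_eq_mul₀ (pow_ne_zero _ (two_ne_zero_of_odd hp))]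
  have hprod := congrArg (Nat.cast : ℕ → ZMod p) (Nat.choose_add_mul_choose_eq_centralBinom_mul hk)
  push_cast at hprod
  obtain ⟨d, rfl⟩ := Nat.exists_eq_add_of_le hk
  have hsign : (-4 : ZMod p) ^ (k + d) * (-1) ^ k = 2 ^ (k + d + k) * (-2) ^ d := by
    rw [pow_add, mul_right_comm, ← mul_pow, neg_mul_neg, mul_one,
      show (-4 : ZMod p) = -2 * 2 by norm_num, show (4 : ZMod p) = 2 ^ 2 by norm_num, mul_pow,
      ← pow_mul]
    ring
  rw [mul_assoc, hprod, centralBinom_eq_neg_four_pow_mul_choose hp hn, Nat.add_sub_cancel_left]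
  linear_combination (((p / 2).choose (k + d) : ℕ) * ((k + d).choose k : ℕ) : ZMod p) * hsign

end ZMod

theorem legendreMod_zmod_eq_sum {p : ℕ} [Fact p.Prime] (hp : Odd p) {r : ℕ} (hr : r < p) :
    legendreMod (ZMod p) r = ∑ k ∈ range (r / 2 + 1),
      (((p / 2).choose (r - k) * (r - k).choose k : ℕ) : (ZMod p)[X]) * (-2 * X) ^ (r - k - k) := by
  rw [legendreMod, mul_sum]
  refine sum_congr rfl fun k hk => ?_
  obtain ⟨n, rfl⟩ := Nat.exists_eq_add_of_le' (show k ≤ r by grind)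
  rw [show 2 * (n + k) - 2 * k = 2 * n by omega, show n + k - 2 * k = n - k by omega,
    Nat.add_sub_cancel, ← mul_assoc, ← C_mul,
    ZMod.inv_two_pow_mul_legendreCoeff_eq hp (by grind) (by omega), mul_pow]
  simp only [C_mul, C_pow, map_natCast, C_neg, C_ofNat, Nat.cast_mul]
  ring

/-- For an odd prime `p`, in `F_p[X]` one has
`Σ_{r=0}^{p-1} P̄_r(X) = ε · (X-1)^{(p-1)/2}` where `ε = (-2/p)` is `1` if `-2` is a square
in `F_p^×` and `-1` otherwise. -/
theorem sum_legendreMod_eq (p : ℕ) [Fact p.Prime] (hodd : Odd p) :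
    ∑ r ∈ Finset.range p, legendreMod (ZMod p) r =
      C (if IsSquare (-2 : ZMod p) then (1 : ZMod p) else -1) *
        (X - 1) ^ ((p - 1) / 2) := by
  have hm := Nat.two_mul_div_two_add_one_of_odd hodd
  have hsign := ZMod.pow_div_two_eq_ite_isSquare (neg_ne_zero.2 (ZMod.two_ne_zero_of_odd hodd))
  set f : ℕ → ℕ → (ZMod p)[X] :=
    fun n k => (((p / 2).choose n * n.choose k : ℕ) : (ZMod p)[X]) * (-2 * X) ^ (n - k)
  calc ∑ r ∈ range p, legendreMod (ZMod p) r
      = ∑ r ∈ range p, ∑ k ∈ range (r / 2 + 1), f (r - k) k :=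
        sum_congr rfl fun r hr => legendreMod_zmod_eq_sum hodd (mem_range.1 hr)
    _ = ∑ n ∈ range (p / 2 + 1), ∑ k ∈ range (n + 1), f n k :=
        sum_range_sum_range_half_eq (by omega) fun n k h => by simp [f, Nat.choose_eq_zero_of_lt h]
    _ = ∑ n ∈ range (p / 2 + 1), ((p / 2).choose n : (ZMod p)[X]) * (1 + -2 * X) ^ n := by
        simp only [f, add_pow, one_pow, one_mul, mul_sum, Nat.cast_mul]
        exact sum_congr rfl fun n _ => sum_congr rfl fun k _ => by ring
    _ = (1 + -2 * X + 1) ^ (p / 2) := by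
        rw [add_pow]
        exact sum_congr rfl fun n _ => by ring
    _ = C ((-2) ^ (p / 2)) * (X - 1) ^ (p / 2) := by
        rw [C_pow, ← mul_pow, C_neg, C_ofNat]
        ring
    _ = _ := by rw [hsign, show (p - 1) / 2 = p / 2 by omega]
end

section
/- Let p be an odd prime. Then in F_p[X] one has the identity Σ_{r=0}^{p-1} (P̄_r(X))² = (X²-1)^{(p-1)/2}. -/
open Polynomial

/-!
Over `ZMod p` put `m = (p - 1) / 2`, so that `m = -1/2` there. Then `C(m, n) (-4)ⁿ = C(2n, n)`
for `n < p`, so the truncation `F = (1 - 2xt + t²)ᵐ` of the generating function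
`(1 - 2xt + t²)^(-1/2) = Σ Pᵣ(x) tʳ` has `P̄ᵣ` as its `tʳ`-coefficient for every `r < p`.
`F` is palindromic of degree `p - 1`, hence
`Σ_{r<p} P̄ᵣ² = Σ_r [tʳ]F · [t^(p-1-r)]F = [t^(p-1)] F²`. Expanding `(1 - 2xt + t²)^(p-1)`
with `C(p - 1, j) = (-1)ʲ` and `4ᵐ = 2^(p-1) = 1` gives `(x² - 1)ᵐ`.
-/

open Finset

section Trinomial

variable {R : Type*} [CommSemiring R]

theorem coeff_one_add_C_mul_X_pow (c : R) (n k : ℕ) :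
    ((1 + C c * X) ^ n).coeff k = (n.choose k : R) * c ^ k := by
  have h : (1 + C c * X : R[X]) ^ n = ((1 + X) ^ n).comp (C c * X) := by
    simp only [pow_comp, add_comp, one_comp, X_comp]
  rw [h, comp_C_mul_X_coeff, coeff_one_add_X_pow]

theorem coeff_one_add_C_mul_X_add_X_sq_pow (c : R) (N r : ℕ) :
    ((1 + C c * X + X ^ 2 : R[X]) ^ N).coeff r =
      ∑ i ∈ range (r / 2 + 1), ((N.choose i * (N - i).choose (r - 2 * i) : ℕ) : R) *
        c ^ (r - 2 * i) := by
  set g : ℕ → R := fun i ↦ if 2 * i ≤ r then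
    ((N.choose i * (N - i).choose (r - 2 * i) : ℕ) : R) * c ^ (r - 2 * i) else 0
  have hexpand : (1 + C c * X + X ^ 2 : R[X]) ^ N =
      ∑ i ∈ range (N + 1), X ^ (2 * i) * (1 + C c * X) ^ (N - i) * (N.choose i : R[X]) := by
    rw [show (1 + C c * X + X ^ 2 : R[X]) = X ^ 2 + (1 + C c * X) by ring, add_pow]
    simp only [pow_mul]
  have hterm (i : ℕ) :
      (X ^ (2 * i) * (1 + C c * X) ^ (N - i) * (N.choose i : R[X])).coeff r = g i := by
    rw [← C_eq_natCast, coeff_mul_C, coeff_X_pow_mul', coeff_one_add_C_mul_X_pow]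
    simp only [g]
    split_ifs <;> push_cast <;> ring
  have hg_of_gt_N : ∀ i ≥ N + 1, g i = 0 := fun i hi ↦ by
    simp [g, Nat.choose_eq_zero_of_lt (show N < i by omega)]
  have hg_of_gt_half : ∀ i ≥ r / 2 + 1, g i = 0 := fun i hi ↦ by
    simp only [g, if_neg (show ¬ 2 * i ≤ r by omega)]
  rw [hexpand, finsetSum_coeff]
  simp only [hterm]
  rw [← eventually_constant_sum hg_of_gt_N (Nat.le_add_right _ (r / 2 + 1)),
    eventually_constant_sum hg_of_gt_half (Nat.le_add_left _ _)]
  exact sum_congr rfl fun i hi ↦ if_pos (by grind)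

theorem reflect_one_add_C_mul_X_add_X_sq (c : R) :
    reflect 2 (1 + C c * X + X ^ 2 : R[X]) = 1 + C c * X + X ^ 2 := by
  have hX : reflect 2 (X : R[X]) = X := by simpa using reflect_monomial (R := R) 2 1
  simp only [reflect_add, reflect_one, reflect_C_mul, hX, reflect_monomial, revAt_le le_rfl,
    Nat.sub_self, pow_zero]
  ring

theorem reflect_one_add_C_mul_X_add_X_sq_pow (c : R) (N : ℕ) :
    reflect (2 * N) ((1 + C c * X + X ^ 2 : R[X]) ^ N) = (1 + C c * X + X ^ 2) ^ N := by
  have hdeg : (1 + C c * X + X ^ 2 : R[X]).natDegree ≤ 2 := by compute_degree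
  induction N with
  | zero => simp [reflect_one]
  | succ N ih =>
    rw [pow_succ, mul_add, mul_one,
      reflect_mul _ _ ((natDegree_pow_le_of_le N hdeg).trans_eq (mul_comm N 2)) hdeg, ih,
      reflect_one_add_C_mul_X_add_X_sq]

theorem coeff_one_add_C_mul_X_add_X_sq_pow_symm (c : R) {N r : ℕ} (hr : r ≤ 2 * N) :
    ((1 + C c * X + X ^ 2 : R[X]) ^ N).coeff r =
      ((1 + C c * X + X ^ 2 : R[X]) ^ N).coeff (2 * N - r) := by
  nth_rw 1 [← reflect_one_add_C_mul_X_add_X_sq_pow, coeff_reflect, revAt_le hr]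

end Trinomial

theorem neg_one_pow_mul_neg_mul_self_pow {A : Type*} [CommRing A] (t : A) (i j : ℕ) :
    (-1) ^ i * (-(t * t)) ^ (i + j) = (-t) ^ j * t ^ (2 * i + j) := by
  have hsq : (-1 : A) ^ i * (-1) ^ i = 1 := by rw [← mul_pow]; norm_num
  rw [neg_pow, neg_pow t]
  linear_combination (-1) ^ j * t ^ (2 * i + 2 * j) * hsq

theorem Nat.choose_mul_centralBinom (i j : ℕ) :
    (i + j).choose i * (i + j).centralBinom =
      (2 * i + j).choose i * (2 * (i + j)).choose (2 * i + j) := by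
  have hbig := Nat.choose_mul (n := 2 * (i + j)) (show i ≤ 2 * i + j by omega)
  have hsmall := Nat.choose_mul (n := 2 * (i + j)) (show i ≤ i + j by omega)
  have hsymm : (2 * (i + j) - i).choose (2 * i + j - i) = (2 * (i + j) - i).choose (i + j - i) := by
    rw [← Nat.choose_symm (by omega)]; congr 1; omega
  rw [Nat.centralBinom_eq_two_mul_choose, mul_comm, hsmall, ← hsymm, ← hbig, mul_comm]

section ZMod

variable {p : ℕ} [Fact p.Prime]

theorem ZMod.two_ne_zero_of_odd_s9 (hp : Odd p) : (2 : ZMod p) ≠ 0 :=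
  Ring.two_ne_zero <| by
    rw [ZMod.ringChar_zmod_n]
    rintro rfl
    exact Nat.not_odd_iff_even.2 even_two hp

theorem ZMod.natCast_choose_pred_eq_neg_one_pow {j : ℕ} (hj : j < p) :
    (((p - 1).choose j : ℕ) : ZMod p) = (-1) ^ j := by
  have hprime : p.Prime := Fact.out
  induction j with
  | zero => simp
  | succ j ih =>
    have hpascal : (p - 1).choose j + (p - 1).choose (j + 1) = p.choose (j + 1) := by
      rw [← Nat.choose_succ_succ', Nat.sub_add_cancel hprime.one_le]
    have hdvd : ((p.choose (j + 1) : ℕ) : ZMod p) = 0 :=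
      (ZMod.natCast_eq_zero_iff _ _).2 (hprime.dvd_choose_self j.succ_ne_zero hj)
    rw [← hpascal, Nat.cast_add, ih (by omega)] at hdvd
    linear_combination hdvd

theorem ZMod.natCast_centralBinom (hp : Odd p) {n : ℕ} (hn : n < p) :
    (n.centralBinom : ZMod p) = (((p - 1) / 2).choose n : ℕ) * (-4) ^ n := by
  obtain ⟨m, hm⟩ := hp
  rw [show (p - 1) / 2 = m by omega]
  have hzero : (2 * m + 1 : ZMod p) = 0 := by
    exact_mod_cast (ZMod.natCast_eq_zero_iff (2 * m + 1) p).2 ⟨1, by omega⟩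
  induction n with
  | zero => simp
  | succ n ih =>
    have hunit : ((n + 1 : ℕ) : ZMod p) ≠ 0 := by
      rw [Ne, ZMod.natCast_eq_zero_iff]
      exact Nat.not_dvd_of_pos_of_lt n.succ_pos hn
    apply mul_left_cancel₀ hunit
    have hcb := congrArg (Nat.cast (R := ZMod p)) (Nat.succ_mul_centralBinom_succ n)
    have hch := congrArg (Nat.cast (R := ZMod p)) (Nat.choose_succ_right_eq m n)
    push_cast at hcb hch ⊢
    rw [hcb, ih (by omega)]
    rcases le_or_gt n m with hnm | hnm
    · rw [Nat.cast_sub hnm] at hch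
      linear_combination
        2 * (-4) ^ n * (m.choose n : ZMod p) * hzero - (-4 : ZMod p) ^ (n + 1) * hch
    · simp [Nat.choose_eq_zero_of_lt hnm, Nat.choose_eq_zero_of_lt (by omega : m < n + 1)]

theorem ZMod.inv_two_pow_mul_legendre_coeff (hp : Odd p) {i j : ℕ} (hij : 2 * i + j < p) :
    ((2 : ZMod p) ^ (2 * i + j))⁻¹ * ((-1) ^ i * ((2 * i + j).choose i : ℕ) *
      ((2 * (i + j)).choose (2 * i + j) : ℕ)) =
      (((p - 1) / 2).choose i * ((p - 1) / 2 - i).choose j : ℕ) * (-2) ^ j := by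
  rw [inv_mul_eq_iff_eq_mul₀ (pow_ne_zero _ (ZMod.two_ne_zero_of_odd_s9 hp))]
  have hsplit := Nat.choose_mul (n := (p - 1) / 2) (Nat.le_add_right i j)
  rw [Nat.add_sub_cancel_left] at hsplit
  have hsign := neg_one_pow_mul_neg_mul_self_pow (2 : ZMod p) i j
  norm_num at hsign
  have hcb := ZMod.natCast_centralBinom hp (show i + j < p by omega)
  have hmul := congrArg (Nat.cast (R := ZMod p)) (Nat.choose_mul_centralBinom i j)
  rw [← hsplit]
  push_cast at hmul ⊢
  linear_combination -(-1) ^ i * hmul + (-1) ^ i * ((i + j).choose i : ZMod p) * hcb +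
    ((i + j).choose i : ZMod p) * (((p - 1) / 2).choose (i + j) : ℕ) * hsign

theorem ZMod.natCast_choose_mul_choose_mul_four_pow {m i : ℕ} (hm : p = 2 * m + 1)
    (hi : i ≤ m) :
    (((2 * m).choose i * (2 * m - i).choose (2 * m - 2 * i) : ℕ) : ZMod p) * 4 ^ (m - i) =
      (-1) ^ i * (m.choose i : ℕ) := by
  have hp : Odd p := ⟨m, hm⟩
  have hsymm : (2 * m - i).choose (2 * m - 2 * i) = (2 * m - i).choose i := by
    rw [show 2 * m - 2 * i = 2 * m - i - i by omega, Nat.choose_symm (by omega)]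
  have hmul := Nat.choose_mul (n := 2 * m) (show i ≤ 2 * i by omega)
  rw [show 2 * i - i = i by omega] at hmul
  have hpred := ZMod.natCast_choose_pred_eq_neg_one_pow (p := p) (j := 2 * i) (by omega)
  have hcb := ZMod.natCast_centralBinom hp (n := i) (by omega)
  rw [show p - 1 = 2 * m by omega] at hpred
  rw [show (p - 1) / 2 = m by omega] at hcb
  have hfermat : (4 : ZMod p) ^ i * 4 ^ (m - i) = 1 := by
    rw [← pow_add, Nat.add_sub_cancel' hi, show (4 : ZMod p) = 2 ^ 2 by norm_num, ← pow_mul,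
      show 2 * m = p - 1 by omega]
    exact ZMod.pow_card_sub_one_eq_one (ZMod.two_ne_zero_of_odd_s9 hp)
  rw [hsymm, ← hmul, Nat.cast_mul, hpred, ← Nat.centralBinom_eq_two_mul_choose, hcb, pow_mul,
    neg_one_sq, one_pow, one_mul, neg_pow (4 : ZMod p)]
  linear_combination (-1) ^ i * (m.choose i : ZMod p) * hfermat

theorem legendreMod_eq_coeff_pow (hp : Odd p) {r : ℕ} (hr : r < p) :
    legendreMod (ZMod p) r =
      ((1 + C (-2 * X) * X + X ^ 2 : (ZMod p)[X][X]) ^ ((p - 1) / 2)).coeff r := by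
  rw [coeff_one_add_C_mul_X_add_X_sq_pow, legendreMod, mul_sum]
  refine sum_congr rfl fun i hi ↦ ?_
  obtain ⟨j, rfl⟩ : ∃ j, r = 2 * i + j := ⟨r - 2 * i, by grind⟩
  have hscalar := congrArg C (ZMod.inv_two_pow_mul_legendre_coeff hp hr)
  rw [show 2 * (2 * i + j) - 2 * i = 2 * (i + j) by omega, Nat.add_sub_cancel_left]
  simp only [map_mul, map_pow, map_natCast, map_neg, map_one, map_ofNat] at hscalar ⊢
  linear_combination X ^ j * hscalar

theorem coeff_pred_pow_pred (hp : Odd p) :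
    ((1 + C (-2 * X) * X + X ^ 2 : (ZMod p)[X][X]) ^ (p - 1)).coeff (p - 1) =
      (X ^ 2 - 1) ^ ((p - 1) / 2) := by
  obtain ⟨m, hm⟩ := hp
  rw [show p - 1 = 2 * m by omega, Nat.mul_div_cancel_left m two_pos,
    coeff_one_add_C_mul_X_add_X_sq_pow, Nat.mul_div_cancel_left m two_pos, sub_eq_neg_add, add_pow]
  refine sum_congr rfl fun i hi ↦ ?_
  have hscalar := congrArg C (ZMod.natCast_choose_mul_choose_mul_four_pow hm (i := i) (by grind))
  simp only [map_mul, map_pow, map_natCast, map_neg, map_one, map_ofNat] at hscalar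
  have hpow : (-2 * X : (ZMod p)[X]) ^ (2 * m - 2 * i) = 4 ^ (m - i) * (X ^ 2) ^ (m - i) := by
    rw [show 2 * m - 2 * i = 2 * (m - i) by omega, pow_mul, ← mul_pow]
    ring
  rw [hpow]
  linear_combination (X ^ 2) ^ (m - i) * hscalar

end ZMod

/-- For an odd prime `p`, in `F_p[X]` one has
`Σ_{r=0}^{p-1} (P̄_r(X))² = (X²-1)^{(p-1)/2}`. -/
theorem sum_legendreMod_sq_eq (p : ℕ) [Fact p.Prime] (hodd : Odd p) :
    ∑ r ∈ Finset.range p, (legendreMod (ZMod p) r) ^ 2 =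
      (X ^ 2 - 1) ^ ((p - 1) / 2) := by
  set f : (ZMod p)[X][X] := (1 + C (-2 * X) * X + X ^ 2) ^ ((p - 1) / 2)
  have htwo_mul_half : 2 * ((p - 1) / 2) = p - 1 := by obtain ⟨m, rfl⟩ := hodd; omega
  calc ∑ r ∈ range p, legendreMod (ZMod p) r ^ 2
      = ∑ r ∈ range (p - 1 + 1), f.coeff r * f.coeff (p - 1 - r) := by
        rw [Nat.sub_add_cancel hodd.pos]
        refine sum_congr rfl fun r hr ↦ ?_
        have hsymm : f.coeff r = f.coeff (p - 1 - r) := by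
          rw [← htwo_mul_half]
          exact coeff_one_add_C_mul_X_add_X_sq_pow_symm _ (by grind)
        rw [sq, legendreMod_eq_coeff_pow hodd (mem_range.1 hr), ← hsymm]
    _ = (f * f).coeff (p - 1) := by
        rw [coeff_mul, Nat.sum_antidiagonal_eq_sum_range_succ (fun i j ↦ f.coeff i * f.coeff j)]
    _ = (X ^ 2 - 1) ^ ((p - 1) / 2) := by
        rw [← pow_add, ← two_mul, htwo_mul_half, coeff_pred_pow_pred hodd]
end

section
/- Let G be a finite group, let H and K be subgroups of G, let V be a finite-dimensional complex inner product space, and let ρ : G → GL(V) be a representation that is unitary with respect to the inner product (i.e., ⟨ρ(g)v, ρ(g)w⟩ = ⟨v,w⟩ for all g ∈ G and v, w ∈ V). Assume the subspace of vectors fixed by ρ(h) for all h ∈ H is one-dimensional, and likewise the subspace of vectors fixed by ρ(k) for all k ∈ K is one-dimensional. Let v_H be an H-fixed vector with ‖v_H‖ = 1 and v_K a K-fixed vector with ‖v_K‖ = 1. Then |⟨v_H, v_K⟩|² = (1/(|H|·|K|)) · Σ_{h ∈ H} Σ_{k ∈ K} tr(ρ(hk)), where tr denotes the trace of the linear operator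 ρ(hk) on V. -/
/-!
Averaging `ρ` over `H` gives `|H|` times a projection onto the `H`-fixed vectors; unitarity makes
it the orthogonal one, and when the fixed space is the line through the unit vector `v_H` this is
the rank-one operator `|v_H⟩⟨v_H|`. Since `ρ(hk) = ρ(h) ρ(k)`, the double sum of `ρ(hk)` is
`|H| |K| |v_H⟩⟨v_H|v_K⟩⟨v_K|`, whose trace is `|H| |K| ⟨v_H, v_K⟩ ⟨v_K, v_H⟩`.
-/

/-- The subspace of vectors fixed by `ρ(h)` for all `h` in the subgroup `H`. -/
def fixedSubmodule {k G V : Type*} [CommRing k] [Group G] [AddCommGroup V] [Module k V]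
    (ρ : Representation k G V) (H : Subgroup G) : Submodule k V where
  carrier := {v | ∀ h ∈ H, ρ h v = v}
  add_mem' := by
    intro a b ha hb h hh
    simp [map_add, ha h hh, hb h hh]
  zero_mem' := by
    intro h hh
    simp
  smul_mem' := by
    intro c v hv h hh
    simp [map_smul, hv h hh]

open InnerProductSpace

lemma Submodule.eq_inner_smul_of_finrank_eq_one {𝕜 E : Type*} [RCLike 𝕜] [NormedAddCommGroup E]
    [InnerProductSpace 𝕜 E] {U : Submodule 𝕜 E} [FiniteDimensional 𝕜 U]
    (hU : Module.finrank 𝕜 U = 1) {w u : E} (hw : w ∈ U) (hw1 : ‖w‖ = 1) (hu : u ∈ U) :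
    u = inner 𝕜 w u • w := by
  have hw0 : w ≠ 0 := norm_ne_zero_iff.mp (hw1 ▸ one_ne_zero)
  have hspan : 𝕜 ∙ w = U :=
    Submodule.eq_of_le_of_finrank_le ((Submodule.span_singleton_le_iff_mem w U).mpr hw)
      (by rw [hU, finrank_span_singleton hw0])
  obtain ⟨c, rfl⟩ := Submodule.mem_span_singleton.mp (hspan ▸ hu)
  rw [inner_smul_right, inner_self_eq_norm_sq_to_K, hw1]
  simp

section FixedVectors

variable {k G V : Type*} [Group G] {H : Subgroup G}

lemma sum_apply_mem_fixedSubmodule [Fintype H] [CommRing k] [AddCommGroup V] [Module k V]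
    (ρ : Representation k G V) (v : V) : ∑ h : H, ρ h v ∈ fixedSubmodule ρ H := by
  intro g hg
  rw [map_sum]
  refine Fintype.sum_equiv (Equiv.mulLeft (⟨g, hg⟩ : H)) _ _ fun h => ?_
  simp [← Module.End.mul_apply, ← map_mul]

variable [RCLike k] [NormedAddCommGroup V] [InnerProductSpace k V] {ρ : Representation k G V}
  (hunit : ∀ (g : G) (v w : V), (inner k (ρ g v) (ρ g w) : k) = inner k v w)
include hunit

lemma inner_apply_of_mem_fixedSubmodule {w : V} (hw : w ∈ fixedSubmodule ρ H) {g : G}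
    (hg : g ∈ H) (v : V) : inner k w (ρ g v) = inner k w v := by
  rw [← hunit g w v, hw g hg]

lemma sum_eq_card_smul_rankOne [Fintype H] [FiniteDimensional k V]
    (hH : Module.finrank k (fixedSubmodule ρ H) = 1)
    {w : V} (hw : w ∈ fixedSubmodule ρ H) (hw1 : ‖w‖ = 1) :
    ∑ h : H, ρ h = (Fintype.card H : k) • (rankOne k w w : V →ₗ[k] V) := by
  ext v
  have hinner : inner k w (∑ h : H, ρ h v) = Fintype.card H * inner k w v := by
    simp [inner_sum, inner_apply_of_mem_fixedSubmodule hunit hw]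
  rw [LinearMap.sum_apply, Submodule.eq_inner_smul_of_finrank_eq_one hH hw hw1
    (sum_apply_mem_fixedSubmodule ρ v), hinner]
  simp [mul_smul]

end FixedVectors

theorem correlation_eq_character_sum_general (G : Type*) [Group G]
    (H K : Subgroup G) [Fintype H] [Fintype K]
    (V : Type*) [NormedAddCommGroup V] [InnerProductSpace ℂ V] [FiniteDimensional ℂ V]
    (ρ : Representation ℂ G V)
    (hunit : ∀ (g : G) (v w : V), (inner ℂ (ρ g v) (ρ g w) : ℂ) = inner ℂ v w)
    (hH : Module.finrank ℂ (fixedSubmodule ρ H) = 1)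
    (hK : Module.finrank ℂ (fixedSubmodule ρ K) = 1)
    (vH vK : V) (hvH : vH ∈ fixedSubmodule ρ H) (hvK : vK ∈ fixedSubmodule ρ K)
    (hnH : ‖vH‖ = 1) (hnK : ‖vK‖ = 1) :
    ((‖(inner ℂ vH vK : ℂ)‖ ^ 2 : ℝ) : ℂ) =
      (1 / ((Fintype.card H : ℂ) * (Fintype.card K : ℂ))) *
        ∑ h : H, ∑ k : K, LinearMap.trace ℂ V (ρ ((h : G) * (k : G))) := by
  have hsum :=
    calc ∑ h : H, ∑ k : K, LinearMap.trace ℂ V (ρ ((h : G) * (k : G)))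
        = LinearMap.trace ℂ V ((∑ h : H, ρ h) * ∑ k : K, ρ k) := by
          simp_rw [Finset.sum_mul_sum, map_sum, map_mul]
      _ = LinearMap.trace ℂ V ((Fintype.card H * Fintype.card K : ℂ) •
            (rankOne ℂ vH vH ∘L rankOne ℂ vK vK : V →ₗ[ℂ] V)) := by
          rw [sum_eq_card_smul_rankOne hunit hH hvH hnH,
            sum_eq_card_smul_rankOne hunit hK hvK hnK, smul_mul_smul]
          rfl
      _ = Fintype.card H * Fintype.card K * (inner ℂ vH vK * inner ℂ vK vH) := by
          rw [rankOne_comp_rankOne, ContinuousLinearMap.toLinearMap_smul, map_smul, map_smul,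
            trace_rankOne, smul_eq_mul, smul_eq_mul]
  have hcard : (Fintype.card H : ℂ) * Fintype.card K ≠ 0 :=
    mul_ne_zero (Nat.cast_ne_zero.mpr Fintype.card_ne_zero)
      (Nat.cast_ne_zero.mpr Fintype.card_ne_zero)
  rw [hsum, ← inner_conj_symm vK vH, Complex.mul_conj, Complex.normSq_eq_norm_sq]
  field_simp

/-- For a finite group `G` with subgroups `H`, `K`, a unitary representation `ρ` of `G` on a
finite-dimensional complex inner product space `V` whose `H`-fixed and `K`-fixed subspaces
are one-dimensional, and unit fixed vectors `v_H`, `v_K`, one has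
`|⟨v_H, v_K⟩|² = (1/(|H|·|K|)) · Σ_{h ∈ H} Σ_{k ∈ K} tr(ρ(hk))`. -/
theorem correlation_eq_character_sum (G : Type*) [Group G] [Fintype G]
    (H K : Subgroup G) [Fintype H] [Fintype K]
    (V : Type*) [NormedAddCommGroup V] [InnerProductSpace ℂ V] [FiniteDimensional ℂ V]
    (ρ : Representation ℂ G V)
    (hunit : ∀ (g : G) (v w : V), (inner ℂ (ρ g v) (ρ g w) : ℂ) = inner ℂ v w)
    (hH : Module.finrank ℂ (fixedSubmodule ρ H) = 1)
    (hK : Module.finrank ℂ (fixedSubmodule ρ K) = 1)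
    (vH vK : V) (hvH : vH ∈ fixedSubmodule ρ H) (hvK : vK ∈ fixedSubmodule ρ K)
    (hnH : ‖vH‖ = 1) (hnK : ‖vK‖ = 1) :
    ((‖(inner ℂ vH vK : ℂ)‖ ^ 2 : ℝ) : ℂ) =
      (1 / ((Fintype.card H : ℂ) * (Fintype.card K : ℂ))) *
        ∑ h : H, ∑ k : K, LinearMap.trace ℂ V (ρ ((h : G) * (k : G))) :=
  correlation_eq_character_sum_general G H K V ρ hunit hH hK vH vK hvH hvK hnH hnK
end
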